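/- Let n ≥ 1 and let Φ = (p₁, Q̃₁, p₂+P̃₂, Q̃₂, …, pₙ+P̃ₙ, Q̃ₙ) and Φ′ = (p₁, Q̃₁′, p₂+P̃₂′, Q̃₂′, …, pₙ+P̃ₙ′, Q̃ₙ′) be two smooth map germs at 0 of ℝ^{2n} in normal form, i.e. ∂Q̃ᵢ/∂qᵢ(0) ≠ 0 and Q̃ᵢ ∈ I_{2i−1} for i = 1,…,n, P̃ᵢ ∈ I_{2i−2} for i = 2,…,n, and the same conditions for the primed data. If there exists a local symplectomorphism Ψ of ω₀ with Φ′∘Ψ = Φ on a neighbourhood of 0, then Ψ is the identity map on a neighbourhood of 0, and consequently Q̃ᵢ = Q̃ᵢ′ (i = 1,…,n) and P̃ᵢ = P̃ᵢ′ (i = 2,…,n) as germs at 0. -/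

import Mathlib

open Filter Topology

noncomputable section

/-- `ℝ^{2n}` with coordinates `(p, q) = (p₁,…,pₙ,q₁,…,qₙ)`. -/
abbrev PQ (n : ℕ) : Type := (Fin n → ℝ) × (Fin n → ℝ)

/-- A smooth germ at `0`: a function which is `C^∞` on some neighbourhood of `0`. -/
def SmoothGerm {E F : Type*} [NormedAddCommGroup E] [NormedSpace ℝ E]
    [NormedAddCommGroup F] [NormedSpace ℝ F] (f : E → F) : Prop :=
  ∃ U ∈ 𝓝 (0 : E), ContDiffOn ℝ (⊤ : ℕ∞) f U

/-- The standard symplectic form `ω₀ = Σᵢ dpᵢ∧dqᵢ` on `ℝ^{2n}` as a constant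
alternating bilinear form. -/
def omega0 (n : ℕ) (u v : PQ n) : ℝ := ∑ i : Fin n, (u.1 i * v.2 i - u.2 i * v.1 i)

/-- A local symplectomorphism of `ω₀`: `Ψ(0) = 0`, smooth near `0`, invertible
derivative, and `DΨ(z)` preserves `ω₀` for all `z` near `0`. -/
def IsLocalSymp (n : ℕ) (Ψ : PQ n → PQ n) : Prop :=
  Ψ 0 = 0 ∧ SmoothGerm Ψ ∧ Function.Bijective ⇑(fderiv ℝ Ψ 0) ∧
    ∀ᶠ z in 𝓝 (0 : PQ n), ∀ u v : PQ n,
      omega0 n (fderiv ℝ Ψ z u) (fderiv ℝ Ψ z v) = omega0 n u v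

/-- The `j`-th generator (0-indexed) of the list `q₁,p₁,q₂,p₂,…,qₙ,pₙ`. -/
def genFun (n j : ℕ) (z : PQ n) : ℝ :=
  if h : j / 2 < n then (if j % 2 = 0 then z.2 ⟨j / 2, h⟩ else z.1 ⟨j / 2, h⟩) else 0

/-- Membership (as germs at `0`) in the ideal `I_k` generated by the first `k`
functions of the list `q₁,p₁,q₂,p₂,…,qₙ,pₙ`. -/
def InIdeal (n k : ℕ) (g : PQ n → ℝ) : Prop :=
  ∃ c : Fin k → (PQ n → ℝ), (∀ j, SmoothGerm (c j)) ∧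
    ∀ᶠ z in 𝓝 (0 : PQ n), g z = ∑ j : Fin k, c j z * genFun n j.1 z

/-!
Since `Ψ` preserves `ω₀`, wherever `ω₀(Ψ ·, v) = ω₀(·, v)` holds near a point, `DΨ` fixes `v`
there. Induct on `i`: once `Ψ` preserves `pⱼ, qⱼ` for `j < i`, `DΨ` fixes their span, so `Ψ - id`
is invariant under translations in those directions and one may restrict to points with
`pⱼ = qⱼ = 0` for `j < i`. There all generators of `I_{2i}` vanish, so the `p`-components of the
two normal forms give `pᵢ ∘ Ψ = pᵢ`. Hence `DΨ` also fixes `∂/∂qᵢ`; restricting further to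
`qᵢ = 0`, where `Q̃ᵢ = 0` and `Q̃ᵢ' = c·qᵢ` with `c(0) ≠ 0`, gives `qᵢ ∘ Ψ = qᵢ`.
-/

section

variable {n : ℕ}

def omega0Bilin (n : ℕ) : PQ n →ₗ[ℝ] PQ n →ₗ[ℝ] ℝ :=
  LinearMap.mk₂ ℝ (omega0 n)
    (fun _ _ _ => by simp only [omega0, ← Finset.sum_add_distrib]; congr 1; ext; simp; ring)
    (fun _ _ _ => by simp only [omega0, Finset.mul_sum, smul_eq_mul]; congr 1; ext; simp; ring)
    (fun _ _ _ => by simp only [omega0, ← Finset.sum_add_distrib]; congr 1; ext; simp; ring)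
    (fun _ _ _ => by simp only [omega0, Finset.mul_sum, smul_eq_mul]; congr 1; ext; simp; ring)

@[simp]
theorem omega0Bilin_apply (u v : PQ n) : omega0Bilin n u v = omega0 n u v := rfl

theorem omega0_eq_zero_of_forall {v : PQ n} (h : ∀ u, omega0 n u v = 0) : v = 0 := by
  refine Prod.ext (funext fun j => ?_) (funext fun j => ?_)
  · simpa [omega0, Pi.single_apply] using h (0, Pi.single j 1)
  · simpa [omega0, Pi.single_apply] using h (Pi.single j 1, 0)

theorem surjective_of_omega0_preserving {D : PQ n →ₗ[ℝ] PQ n}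
    (hD : ∀ u v, omega0 n (D u) (D v) = omega0 n u v) : Function.Surjective D := by
  refine LinearMap.injective_iff_surjective.mp fun a b hab => ?_
  refine sub_eq_zero.mp (omega0_eq_zero_of_forall fun u => ?_)
  rw [← hD, map_sub, hab, sub_self, ← omega0Bilin_apply, map_zero]

theorem apply_eq_self_of_omega0_preserving {D : PQ n →ₗ[ℝ] PQ n}
    (hD : ∀ u v, omega0 n (D u) (D v) = omega0 n u v) {v : PQ n}
    (hv : ∀ u, omega0 n (D u) v = omega0 n u v) : D v = v := by
  refine sub_eq_zero.mp (omega0_eq_zero_of_forall fun x => ?_)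
  obtain ⟨u, rfl⟩ := surjective_of_omega0_preserving hD x
  rw [← omega0Bilin_apply, map_sub, omega0Bilin_apply, omega0Bilin_apply, hD, hv, sub_self]

theorem HasFDerivAt.comp_eq_of_eventuallyEq {E F : Type*} [NormedAddCommGroup E]
    [NormedSpace ℝ E] [NormedAddCommGroup F] [NormedSpace ℝ F] {f : E → E} {f' : E →L[ℝ] E}
    {x : E} (hf : HasFDerivAt f f' x) {ℓ : E →L[ℝ] F} (hℓ : ℓ ∘ f =ᶠ[𝓝 x] ℓ) :
    ℓ.comp f' = ℓ :=
  ((ℓ.hasFDerivAt.comp x hf).congr_of_eventuallyEq hℓ.symm).unique ℓ.hasFDerivAt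

theorem HasFDerivAt.apply_eq_self_of_omega0 {Ψ : PQ n → PQ n} {D : PQ n →L[ℝ] PQ n}
    {z : PQ n} (hΨ : HasFDerivAt Ψ D z) (hD : ∀ u v, omega0 n (D u) (D v) = omega0 n u v)
    {v : PQ n} (hv : ∀ᶠ w in 𝓝 z, omega0 n (Ψ w) v = omega0 n w v) : D v = v := by
  set ℓ : PQ n →L[ℝ] ℝ := LinearMap.toContinuousLinearMap ((omega0Bilin n).flip v)
  have h := hΨ.comp_eq_of_eventuallyEq (ℓ := ℓ) hv
  exact apply_eq_self_of_omega0_preserving (D := (D : PQ n →ₗ[ℝ] PQ n)) hD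
    fun u => congrArg (· u) h

theorem Convex.apply_sub_self_eq {E : Type*} [NormedAddCommGroup E] [NormedSpace ℝ E]
    {s : Set E} (hs : Convex ℝ s) {f : E → E} {f' : E → E →L[ℝ] E}
    (hf : ∀ x ∈ s, HasFDerivAt f (f' x) x) {x y : E} (hx : x ∈ s) (hy : y ∈ s)
    (hfix : ∀ z ∈ s, f' z (y - x) = y - x) : f y - y = f x - x := by
  set γ : ℝ → E := fun t => f (x + t • (y - x)) - (x + t • (y - x))
  have hmem : ∀ t ∈ Set.Icc (0 : ℝ) 1, x + t • (y - x) ∈ s := fun t ht =>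
    hs.add_smul_sub_mem hx hy ht
  have hγ : ∀ t ∈ Set.Icc (0 : ℝ) 1, HasDerivAt γ 0 t := by
    intro t ht
    have hline : HasDerivAt (fun t : ℝ => x + t • (y - x)) (y - x) t := by
      simpa using ((hasDerivAt_id t).smul_const (y - x)).const_add x
    have := ((hf _ (hmem t ht)).comp_hasDerivAt t hline).sub hline
    rwa [hfix _ (hmem t ht), sub_self] at this
  have := constant_of_has_deriv_right_zero (fun t ht => (hγ t ht).continuousAt.continuousWithinAt)
    (fun t ht => (hγ t (Set.Ico_subset_Icc_self ht)).hasDerivWithinAt) 1 (by simp)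
  simpa [γ] using this

namespace PQ

def AgreeBelow (i : ℕ) (x y : PQ n) : Prop :=
  ∀ j : Fin n, j.1 < i → x.1 j = y.1 j ∧ x.2 j = y.2 j

def SupportedBelow (i : ℕ) (v : PQ n) : Prop :=
  ∀ j : Fin n, i ≤ j.1 → v.1 j = 0 ∧ v.2 j = 0

def eQ (i : Fin n) : PQ n := (0, Pi.single i 1)

def truncBelow (i : ℕ) (z : PQ n) : PQ n :=
  (fun j => if j.1 < i then 0 else z.1 j, fun j => if j.1 < i then 0 else z.2 j)

theorem AgreeBelow.trans {i : ℕ} {x y z : PQ n} (hxy : AgreeBelow i x y)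
    (hyz : AgreeBelow i y z) : AgreeBelow i x z := fun j hj =>
  ⟨(hxy j hj).1.trans (hyz j hj).1, (hxy j hj).2.trans (hyz j hj).2⟩

theorem omega0_eq_of_agreeBelow {i : ℕ} {x y v : PQ n} (h : AgreeBelow i x y)
    (hv : SupportedBelow i v) : omega0 n x v = omega0 n y v := by
  refine Finset.sum_congr rfl fun j _ => ?_
  rcases lt_or_ge j.1 i with hj | hj
  · rw [(h j hj).1, (h j hj).2]
  · simp [(hv j hj).1, (hv j hj).2]

@[simp]
theorem omega0_eQ (u : PQ n) (i : Fin n) : omega0 n u (eQ i) = u.1 i := by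
  simp [omega0, eQ, Pi.single_apply]

theorem agreeBelow_truncBelow (i : ℕ) (z : PQ n) : AgreeBelow i (truncBelow i z) 0 :=
  fun j hj => by simp [truncBelow, hj]

theorem supportedBelow_sub_truncBelow (i : ℕ) (z : PQ n) :
    SupportedBelow i (z - truncBelow i z) :=
  fun j hj => by simp [truncBelow, hj.not_gt]

@[simp]
theorem truncBelow_fst_self (i : Fin n) (z : PQ n) : (truncBelow i z).1 i = z.1 i := by
  simp [truncBelow]

@[simp]
theorem truncBelow_snd_self (i : Fin n) (z : PQ n) : (truncBelow i z).2 i = z.2 i := by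
  simp [truncBelow]

theorem norm_le_of_forall_eq_or_eq_zero {w z : PQ n} (h₁ : ∀ j, w.1 j = z.1 j ∨ w.1 j = 0)
    (h₂ : ∀ j, w.2 j = z.2 j ∨ w.2 j = 0) : ‖w‖ ≤ ‖z‖ := by
  refine max_le ((pi_norm_le_iff_of_nonneg (norm_nonneg z)).2 fun j => ?_)
    ((pi_norm_le_iff_of_nonneg (norm_nonneg z)).2 fun j => ?_)
  · rcases h₁ j with h | h <;> rw [h]
    · exact (norm_le_pi_norm z.1 j).trans (norm_fst_le z)
    · simp
  · rcases h₂ j with h | h <;> rw [h]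
    · exact (norm_le_pi_norm z.2 j).trans (norm_snd_le z)
    · simp

theorem norm_truncBelow_le (i : ℕ) (z : PQ n) : ‖truncBelow i z‖ ≤ ‖z‖ :=
  norm_le_of_forall_eq_or_eq_zero (fun j => by by_cases h : j.1 < i <;> simp [truncBelow, h])
    (fun j => by by_cases h : j.1 < i <;> simp [truncBelow, h])

theorem norm_sub_smul_eQ_le (i : Fin n) (z : PQ n) : ‖z - z.2 i • eQ i‖ ≤ ‖z‖ :=
  norm_le_of_forall_eq_or_eq_zero (fun j => by simp [eQ])
    (fun j => by by_cases h : j = i <;> simp [eQ, h])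

open Metric

theorem apply_eq_self_on_ball_of_omega0 {Ψ : PQ n → PQ n} {Ψ' : PQ n → PQ n →L[ℝ] PQ n} {r : ℝ}
    (hΨ : ∀ z ∈ ball 0 r, HasFDerivAt Ψ (Ψ' z) z)
    (hω : ∀ z ∈ ball 0 r, ∀ u v, omega0 n (Ψ' z u) (Ψ' z v) = omega0 n u v) {v : PQ n}
    (hv : ∀ w ∈ ball 0 r, omega0 n (Ψ w) v = omega0 n w v) : ∀ z ∈ ball 0 r, Ψ' z v = v :=
  fun z hz => (hΨ z hz).apply_eq_self_of_omega0 (hω z hz)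
    (eventually_of_mem (isOpen_ball.mem_nhds hz) hv)

theorem agreeBelow_succ_on_ball {Ψ : PQ n → PQ n} {Ψ' : PQ n → PQ n →L[ℝ] PQ n} {r : ℝ}
    (hΨ : ∀ z ∈ ball 0 r, HasFDerivAt Ψ (Ψ' z) z)
    (hω : ∀ z ∈ ball 0 r, ∀ u v, omega0 n (Ψ' z u) (Ψ' z v) = omega0 n u v) (i : Fin n)
    (hp : ∀ w ∈ ball 0 r, AgreeBelow i w 0 → AgreeBelow i (Ψ w) 0 → (Ψ w).1 i = w.1 i)
    (hq : ∀ w ∈ ball 0 r, AgreeBelow i w 0 → AgreeBelow i (Ψ w) 0 → w.2 i = 0 → (Ψ w).2 i = 0)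
    (hagree : ∀ z ∈ ball 0 r, AgreeBelow i (Ψ z) z) :
    ∀ z ∈ ball 0 r, AgreeBelow (i + 1) (Ψ z) z := by
  have hfix_low : ∀ v, SupportedBelow i v → ∀ z ∈ ball 0 r, Ψ' z v = v := fun v hv =>
    apply_eq_self_on_ball_of_omega0 hΨ hω fun w hw => omega0_eq_of_agreeBelow (hagree w hw) hv
  have htrunc_mem : ∀ z ∈ ball (0 : PQ n) r, truncBelow i z ∈ ball 0 r := fun z hz =>
    mem_ball_zero_iff.2 ((norm_truncBelow_le i z).trans_lt (mem_ball_zero_iff.1 hz))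
  -- Along directions fixed by the derivative, `Ψ - id` is constant, which reduces everything
  -- to points of the coordinate subspace `{pⱼ = qⱼ = 0, j < i}`.
  have hreduce : ∀ z ∈ ball (0 : PQ n) r, Ψ z - z = Ψ (truncBelow i z) - truncBelow i z ∧
      AgreeBelow i (Ψ (truncBelow i z)) 0 := fun z hz =>
    ⟨(convex_ball 0 r).apply_sub_self_eq hΨ (htrunc_mem z hz) hz
      (hfix_low _ (supportedBelow_sub_truncBelow i z)),
     (hagree _ (htrunc_mem z hz)).trans (agreeBelow_truncBelow i z)⟩
  have hP : ∀ z ∈ ball 0 r, (Ψ z).1 i = z.1 i := by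
    intro z hz
    obtain ⟨hsub, hΨw⟩ := hreduce z hz
    have hw := hp _ (htrunc_mem z hz) (agreeBelow_truncBelow i z) hΨw
    have := congrArg (fun x : PQ n => x.1 i) hsub
    simp only [Prod.fst_sub, Pi.sub_apply, hw, truncBelow_fst_self] at this
    linarith
  have hfix_eQ : ∀ z ∈ ball 0 r, Ψ' z (eQ i) = eQ i :=
    apply_eq_self_on_ball_of_omega0 hΨ hω fun w hw => by simp [hP w hw]
  have hQ : ∀ z ∈ ball 0 r, (Ψ z).2 i = z.2 i := by
    intro z hz
    set z' := z - z.2 i • eQ i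
    have hz' : z' ∈ ball 0 r :=
      mem_ball_zero_iff.2 ((norm_sub_smul_eQ_le i z).trans_lt (mem_ball_zero_iff.1 hz))
    obtain ⟨hsub, hΨw⟩ := hreduce z' hz'
    have hz'_i : z'.2 i = 0 := by simp [z', eQ]
    have hshift : Ψ z - z = Ψ z' - z' := by
      refine (convex_ball 0 r).apply_sub_self_eq hΨ hz' hz fun x hx => ?_
      rw [sub_sub_cancel, map_smul, hfix_eQ x hx]
    have hw := hq _ (htrunc_mem z' hz') (agreeBelow_truncBelow i z') hΨw
      (by rw [truncBelow_snd_self, hz'_i])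
    have := congrArg (fun x : PQ n => x.2 i) (hshift.trans hsub)
    simp only [Prod.snd_sub, Pi.sub_apply, hw, truncBelow_snd_self, hz'_i] at this
    linarith
  intro z hz j hj
  rcases Nat.lt_succ_iff_lt_or_eq.mp hj with hj | hj
  · exact hagree z hz j hj
  · obtain rfl : j = i := Fin.ext hj
    exact ⟨hP z hz, hQ z hz⟩

theorem eqOn_ball_of_triangular {Ψ : PQ n → PQ n} {Ψ' : PQ n → PQ n →L[ℝ] PQ n} {r : ℝ}
    (hΨ : ∀ z ∈ ball 0 r, HasFDerivAt Ψ (Ψ' z) z)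
    (hω : ∀ z ∈ ball 0 r, ∀ u v, omega0 n (Ψ' z u) (Ψ' z v) = omega0 n u v)
    (hp : ∀ i : Fin n, ∀ w ∈ ball 0 r,
      AgreeBelow i w 0 → AgreeBelow i (Ψ w) 0 → (Ψ w).1 i = w.1 i)
    (hq : ∀ i : Fin n, ∀ w ∈ ball 0 r,
      AgreeBelow i w 0 → AgreeBelow i (Ψ w) 0 → w.2 i = 0 → (Ψ w).2 i = 0) :
    ∀ z ∈ ball 0 r, Ψ z = z := by
  have hagree : ∀ i ≤ n, ∀ z ∈ ball 0 r, AgreeBelow i (Ψ z) z := by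
    intro i
    induction i with
    | zero => exact fun _ _ _ _ hj => absurd hj (Nat.not_lt_zero _)
    | succ i ih => exact fun hi =>
        agreeBelow_succ_on_ball hΨ hω ⟨i, hi⟩ (hp _) (hq _) (ih (Nat.le_of_succ_le hi))
  intro z hz
  exact Prod.ext (funext fun j => (hagree n le_rfl z hz j j.2).1)
    (funext fun j => (hagree n le_rfl z hz j j.2).2)

theorem eventually_eq_self_of_triangular {Ψ : PQ n → PQ n} {Ψ' : PQ n → PQ n →L[ℝ] PQ n}
    (hΨ : ∀ᶠ z in 𝓝 0, HasFDerivAt Ψ (Ψ' z) z)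
    (hω : ∀ᶠ z in 𝓝 0, ∀ u v, omega0 n (Ψ' z u) (Ψ' z v) = omega0 n u v)
    (hp : ∀ i : Fin n, ∀ᶠ w in 𝓝 0,
      AgreeBelow i w 0 → AgreeBelow i (Ψ w) 0 → (Ψ w).1 i = w.1 i)
    (hq : ∀ i : Fin n, ∀ᶠ w in 𝓝 0,
      AgreeBelow i w 0 → AgreeBelow i (Ψ w) 0 → w.2 i = 0 → (Ψ w).2 i = 0) :
    ∀ᶠ z in 𝓝 0, Ψ z = z := by
  obtain ⟨r, hr, hball⟩ := eventually_nhds_iff_ball.mp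
    (hΨ.and (hω.and ((eventually_all.2 hp).and (eventually_all.2 hq))))
  filter_upwards [ball_mem_nhds 0 hr] with z hz
  exact eqOn_ball_of_triangular (fun z hz => (hball z hz).1) (fun z hz => (hball z hz).2.1)
    (fun i w hw => (hball w hw).2.2.1 i) (fun i w hw => (hball w hw).2.2.2 i) z hz

end PQ

open PQ

theorem SmoothGerm.contDiffAt {E F : Type*} [NormedAddCommGroup E] [NormedSpace ℝ E]
    [NormedAddCommGroup F] [NormedSpace ℝ F] {f : E → F} (hf : SmoothGerm f) :
    ContDiffAt ℝ (⊤ : ℕ∞) f 0 :=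
  let ⟨_, hU, hfU⟩ := hf
  hfU.contDiffAt hU

theorem SmoothGerm.eventually_differentiableAt {E F : Type*} [NormedAddCommGroup E]
    [NormedSpace ℝ E] [NormedAddCommGroup F] [NormedSpace ℝ F] {f : E → F}
    (hf : SmoothGerm f) : ∀ᶠ z in 𝓝 0, DifferentiableAt ℝ f z := by
  obtain ⟨U, hU, hfU⟩ := hf
  filter_upwards [eventually_mem_nhds_iff.2 hU] with z hz
  exact (hfU.contDiffAt hz).differentiableAt (by simp)

theorem genFun_eq_zero_of_agreeBelow {i m : ℕ} {z : PQ n} (hz : AgreeBelow i z 0)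
    (hm : m < 2 * i) : genFun n m z = 0 := by
  unfold genFun
  split_ifs with hmn
  · exact (hz ⟨m / 2, hmn⟩ (show m / 2 < i by omega)).2
  · exact (hz ⟨m / 2, hmn⟩ (show m / 2 < i by omega)).1
  · rfl

theorem genFun_two_mul (i : Fin n) (z : PQ n) : genFun n (2 * i) z = z.2 i := by
  simp [genFun, i.2]

theorem sum_mul_genFun_eq_zero {i : ℕ} {z : PQ n} (hz : AgreeBelow i z 0)
    (c : Fin (2 * i) → PQ n → ℝ) : ∑ j : Fin (2 * i), c j z * genFun n j z = 0 :=
  Finset.sum_eq_zero fun j _ => by rw [genFun_eq_zero_of_agreeBelow hz j.2, mul_zero]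

theorem InIdeal.eventually_eq_zero {i : ℕ} {g : PQ n → ℝ} (hg : InIdeal n (2 * i) g) :
    ∀ᶠ z in 𝓝 0, AgreeBelow i z 0 → g z = 0 := by
  obtain ⟨c, -, hc⟩ := hg
  filter_upwards [hc] with z hz h0
  rw [hz, sum_mul_genFun_eq_zero h0]

theorem InIdeal.exists_eventually_eq_mul {i : Fin n} {g : PQ n → ℝ}
    (hg : InIdeal n (2 * i + 1) g) :
    ∃ c, SmoothGerm c ∧ ∀ᶠ z in 𝓝 0, AgreeBelow i z 0 → g z = c z * z.2 i := by
  obtain ⟨c, hc, hgc⟩ := hg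
  refine ⟨c (Fin.last _), hc _, ?_⟩
  filter_upwards [hgc] with z hz h0
  rw [hz, Fin.sum_univ_castSucc]
  simp only [Fin.val_castSucc, Fin.val_last]
  rw [sum_mul_genFun_eq_zero h0 fun j => c j.castSucc, genFun_two_mul, zero_add]

/-- Differentiate along the `qᵢ`-axis, on which `g = c · qᵢ`. -/
theorem fderiv_apply_eQ_eq {i : Fin n} {g c : PQ n → ℝ} (hg : DifferentiableAt ℝ g 0)
    (hc : SmoothGerm c) (hgc : ∀ᶠ z in 𝓝 0, AgreeBelow i z 0 → g z = c z * z.2 i) :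
    fderiv ℝ g 0 (eQ i) = c 0 := by
  have hline : HasDerivAt (fun t : ℝ => t • eQ i) (eQ i) 0 := by
    simpa using (hasDerivAt_id (0 : ℝ)).smul_const (eQ i)
  have hg' : HasDerivAt (fun t : ℝ => g (t • eQ i)) (fderiv ℝ g 0 (eQ i)) 0 :=
    hg.hasFDerivAt.comp_hasDerivAt_of_eq (x := 0) hline (zero_smul ℝ _).symm
  have hc' : HasDerivAt (fun t : ℝ => c (t • eQ i) * t) (c 0) 0 := by
    have hcd := (hc.contDiffAt.differentiableAt (by simp)).hasFDerivAt.comp_hasDerivAt_of_eq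
      (x := 0) hline (zero_smul ℝ _).symm
    simpa using hcd.fun_mul (hasDerivAt_id (0 : ℝ))
  have htendsto : Tendsto (fun t : ℝ => t • eQ i) (𝓝 0) (𝓝 0) := by
    simpa using hline.continuousAt.tendsto
  refine hg'.unique (hc'.congr_of_eventuallyEq ?_)
  filter_upwards [htendsto.eventually hgc] with t ht
  simpa [eQ] using ht fun j hj => by simp [eQ, Fin.ne_of_lt hj]

theorem InIdeal.eventually_snd_eq_zero {i : Fin n} {g : PQ n → ℝ} (hg : InIdeal n (2 * i + 1) g)
    (hd : fderiv ℝ g 0 (eQ i) ≠ 0) : ∀ᶠ z in 𝓝 0, AgreeBelow i z 0 → g z = 0 → z.2 i = 0 := by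
  obtain ⟨c, hc, hgc⟩ := hg.exists_eventually_eq_mul
  have hdiff : DifferentiableAt ℝ g 0 := by
    by_contra h
    simp [fderiv_zero_of_not_differentiableAt h] at hd
  have hc0 : c 0 ≠ 0 := fderiv_apply_eQ_eq hdiff hc hgc ▸ hd
  filter_upwards [hgc, hc.contDiffAt.continuousAt.eventually_ne hc0] with z hz hcz h0 hg0
  exact (mul_eq_zero.mp ((hz h0).symm.trans hg0)).resolve_left hcz

theorem IsLocalSymp.tendsto {Ψ : PQ n → PQ n} (hΨ : IsLocalSymp n Ψ) :
    Tendsto Ψ (𝓝 0) (𝓝 0) := by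
  simpa [hΨ.1] using hΨ.2.1.contDiffAt.continuousAt.tendsto

theorem IsLocalSymp.eventually_hasFDerivAt {Ψ : PQ n → PQ n} (hΨ : IsLocalSymp n Ψ) :
    ∀ᶠ z in 𝓝 0, HasFDerivAt Ψ (fderiv ℝ Ψ z) z :=
  hΨ.2.1.eventually_differentiableAt.mono fun _ h => h.hasFDerivAt

theorem eventually_fst_eq_of_conj {Ψ : PQ n → PQ n} (hΨ : Tendsto Ψ (𝓝 0) (𝓝 0))
    {i : Fin n} {P P' : PQ n → ℝ} (hP : InIdeal n (2 * i) P) (hP' : InIdeal n (2 * i) P')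
    (hconj : ∀ᶠ z in 𝓝 0, (Ψ z).1 i + P' (Ψ z) = z.1 i + P z) :
    ∀ᶠ w in 𝓝 0, AgreeBelow i w 0 → AgreeBelow i (Ψ w) 0 → (Ψ w).1 i = w.1 i := by
  filter_upwards [hconj, hP.eventually_eq_zero, hΨ.eventually hP'.eventually_eq_zero]
    with w hw hPw hP'w hw0 hΨw0
  linarith [hPw hw0, hP'w hΨw0]

theorem eventually_snd_eq_zero_of_conj {Ψ : PQ n → PQ n} (hΨ : Tendsto Ψ (𝓝 0) (𝓝 0))
    {i : Fin n} {Q Q' : PQ n → ℝ} (hQ : InIdeal n (2 * i + 1) Q)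
    (hQ' : InIdeal n (2 * i + 1) Q') (hd : fderiv ℝ Q' 0 (eQ i) ≠ 0)
    (hconj : ∀ᶠ z in 𝓝 0, Q' (Ψ z) = Q z) :
    ∀ᶠ w in 𝓝 0, AgreeBelow i w 0 → AgreeBelow i (Ψ w) 0 → w.2 i = 0 → (Ψ w).2 i = 0 := by
  obtain ⟨c, -, hc⟩ := hQ.exists_eventually_eq_mul
  filter_upwards [hconj, hc, hΨ.eventually (hQ'.eventually_snd_eq_zero hd)]
    with w hw hcw hQ'w hw0 hΨw0 hwi
  exact hQ'w hΨw0 (by rw [hw, hcw hw0, hwi, mul_zero])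

end

theorem diffeo_normal_form_invariants_general (n : ℕ)
    (Pt Qt Pt' Qt' : Fin n → (PQ n → ℝ))
    (hQd' : ∀ i : Fin n, fderiv ℝ (Qt' i) 0 ((0, Pi.single i 1) : PQ n) ≠ 0)
    (hPI : ∀ i : Fin n, InIdeal n (2 * i.1) (Pt i))
    (hQI : ∀ i : Fin n, InIdeal n (2 * i.1 + 1) (Qt i))
    (hPI' : ∀ i : Fin n, InIdeal n (2 * i.1) (Pt' i))
    (hQI' : ∀ i : Fin n, InIdeal n (2 * i.1 + 1) (Qt' i))
    (Ψ : PQ n → PQ n) (hΨ : IsLocalSymp n Ψ)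
    (hconj : ∀ᶠ z in 𝓝 (0 : PQ n),
      ((fun i => (Ψ z).1 i + Pt' i (Ψ z), fun i => Qt' i (Ψ z)) : PQ n) =
        ((fun i => z.1 i + Pt i z, fun i => Qt i z) : PQ n)) :
    (∀ᶠ z in 𝓝 (0 : PQ n), Ψ z = z) ∧
      (∀ i : Fin n, ∀ᶠ z in 𝓝 (0 : PQ n), Qt i z = Qt' i z) ∧
      (∀ i : Fin n, ∀ᶠ z in 𝓝 (0 : PQ n), Pt i z = Pt' i z) := by
  have hconjP : ∀ i, ∀ᶠ z in 𝓝 0, (Ψ z).1 i + Pt' i (Ψ z) = z.1 i + Pt i z := fun i =>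
    hconj.mono fun _ h => congrFun (congrArg Prod.fst h) i
  have hconjQ : ∀ i, ∀ᶠ z in 𝓝 0, Qt' i (Ψ z) = Qt i z := fun i =>
    hconj.mono fun _ h => congrFun (congrArg Prod.snd h) i
  have hid : ∀ᶠ z in 𝓝 0, Ψ z = z :=
    PQ.eventually_eq_self_of_triangular hΨ.eventually_hasFDerivAt hΨ.2.2.2
      (fun i => eventually_fst_eq_of_conj hΨ.tendsto (hPI i) (hPI' i) (hconjP i))
      (fun i => eventually_snd_eq_zero_of_conj hΨ.tendsto (hQI i) (hQI' i) (hQd' i) (hconjQ i))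
  refine ⟨hid, fun i => ?_, fun i => ?_⟩
  · filter_upwards [hid, hconjQ i] with z hΨz hz
    rw [← hz, hΨz]
  · filter_upwards [hid, hconjP i] with z hΨz hz
    rw [hΨz] at hz
    linarith

/-- the functions `Q̃ᵢ`, `P̃ᵢ` in the normal form of Theorem 1 are
functional invariants: any symplectomorphism conjugating two normal forms is the
identity, and the corresponding invariants coincide as germs. -/
theorem diffeo_normal_form_invariants (n : ℕ) (hn : 1 ≤ n)
    (Pt Qt Pt' Qt' : Fin n → (PQ n → ℝ))
    (hPsm : ∀ i, SmoothGerm (Pt i)) (hQsm : ∀ i, SmoothGerm (Qt i))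
    (hPsm' : ∀ i, SmoothGerm (Pt' i)) (hQsm' : ∀ i, SmoothGerm (Qt' i))
    (hPt0 : Pt ⟨0, hn⟩ = 0) (hPt0' : Pt' ⟨0, hn⟩ = 0)
    (hQd : ∀ i : Fin n, fderiv ℝ (Qt i) 0 ((0, Pi.single i 1) : PQ n) ≠ 0)
    (hQd' : ∀ i : Fin n, fderiv ℝ (Qt' i) 0 ((0, Pi.single i 1) : PQ n) ≠ 0)
    (hPI : ∀ i : Fin n, InIdeal n (2 * i.1) (Pt i))
    (hQI : ∀ i : Fin n, InIdeal n (2 * i.1 + 1) (Qt i))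
    (hPI' : ∀ i : Fin n, InIdeal n (2 * i.1) (Pt' i))
    (hQI' : ∀ i : Fin n, InIdeal n (2 * i.1 + 1) (Qt' i))
    (Ψ : PQ n → PQ n) (hΨ : IsLocalSymp n Ψ)
    (hconj : ∀ᶠ z in 𝓝 (0 : PQ n),
      ((fun i => (Ψ z).1 i + Pt' i (Ψ z), fun i => Qt' i (Ψ z)) : PQ n) =
        ((fun i => z.1 i + Pt i z, fun i => Qt i z) : PQ n)) :
    (∀ᶠ z in 𝓝 (0 : PQ n), Ψ z = z) ∧
      (∀ i : Fin n, ∀ᶠ z in 𝓝 (0 : PQ n), Qt i z = Qt' i z) ∧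
      (∀ i : Fin n, ∀ᶠ z in 𝓝 (0 : PQ n), Pt i z = Pt' i z) :=
  diffeo_normal_form_invariants_general n Pt Qt Pt' Qt' hQd' hPI hQI hPI' hQI' Ψ hΨ hconj
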